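/- arXiv:2202.06450 — 2 statements merged into one kernel-verified Lean document; each statement's English description precedes it below -/
import Mathlib

section
/- Let d, K, N be positive integers and ε > 0. Let φ_1, …, φ_{K·N} ∈ ℝ^d satisfy ‖φ_t‖ ≤ 1 for all t; for k = 1,…,K set Φ_{k−1} = Σ_{t=(k−1)N+1}^{kN} φ_t φ_tᵀ, and define A_0 = I and A_{kN} = A_{(k−1)N} + Φ_{k−1}. Let K⁺ = {k ∈ {1,…,K} : Tr(A_{(k−1)N}^{-1} Φ_{k−1}) ≥ N·ε}. If N·ε ≥ d·log(1 + K·N/d), then |K⁺| · log( N·ε / (d·log(1 + K·N/d)) ) ≤ d·log(1 + K·N/d). -/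
/-!
Each batch multiplies the determinant by at least `1 + Tr (A⁻¹ Φ)`: conjugating by `√A` gives
`det (A + Φ) = det A · det (1 + M)` with `M = A^{-1/2} Φ A^{-1/2} ⪰ 0` and `Tr M = Tr (A⁻¹ Φ)`, and
`det (1 + M) = ∏ (1 + λᵢ) ≥ 1 + ∑ λᵢ`. Hence the batches of `K⁺` contribute at least
`|K⁺| log (1 + Nε)` to `log det A_K`, while concavity of `log` on the eigenvalues gives
`log det A_K ≤ d log (Tr A_K / d) ≤ d log (1 + KN/d) =: L`. Finally `|K⁺| log (1 + Nε) ≤ L` turns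
into the claim because, as soon as `K⁺ ≠ ∅`, `Nε / (1 + Nε) ≤ log (1 + Nε) ≤ L`, i.e.
`Nε / L ≤ 1 + Nε`.
-/

open Matrix Finset

lemma Real.log_div_le_log_one_add {x L : ℝ} (hx : 0 ≤ x) (h : Real.log (1 + x) ≤ L) :
    Real.log (x / L) ≤ Real.log (1 + x) := by
  rcases hx.eq_or_lt with rfl | hx
  · simp
  have hL : 0 < L := (Real.log_pos (by linarith)).trans_le h
  have hx1 : 0 < 1 + x := by linarith
  have hfrac : x / (1 + x) ≤ L := by
    have := Real.one_sub_inv_le_log_of_pos hx1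
    rw [show x / (1 + x) = 1 - (1 + x)⁻¹ by field_simp; ring]
    linarith
  refine Real.log_le_log (by positivity) ((div_le_iff₀ hL).2 ?_)
  rwa [div_le_iff₀ hx1, mul_comm] at hfrac

lemma Real.mul_log_div_le_of_mul_log_one_add_le {c : ℕ} {x L : ℝ} (hx : 0 ≤ x)
    (h : c * Real.log (1 + x) ≤ L) : c * Real.log (x / L) ≤ L := by
  have hlog : 0 ≤ Real.log (1 + x) := Real.log_nonneg (by linarith)
  rcases Nat.eq_zero_or_pos c with rfl | hc
  · simpa using h
  have hc : (1 : ℝ) ≤ c := by exact_mod_cast hc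
  calc c * Real.log (x / L)
      ≤ c * Real.log (1 + x) :=
        mul_le_mul_of_nonneg_left (log_div_le_log_one_add hx (by nlinarith)) (by positivity)
    _ ≤ L := h

lemma Finset.one_add_sum_le_prod_one_add {ι R : Type*} [CommRing R] [LinearOrder R]
    [IsStrictOrderedRing R] (s : Finset ι) {f : ι → R}
    (hf : ∀ i ∈ s, 0 ≤ f i) : 1 + ∑ i ∈ s, f i ≤ ∏ i ∈ s, (1 + f i) := by
  classical
  induction s using Finset.induction with
  | empty => simp
  | insert a s ha ih =>
    rw [sum_insert ha, prod_insert ha]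
    have hs := ih fun i hi => hf i (mem_insert_of_mem hi)
    have hsum : 0 ≤ ∑ i ∈ s, f i := sum_nonneg fun i hi => hf i (mem_insert_of_mem hi)
    nlinarith [hf a (mem_insert_self a s)]

lemma EuclideanSpace.trace_vecMulVec_self {n : Type*} [Fintype n] (v : EuclideanSpace ℝ n) :
    (vecMulVec v v).trace = ‖v‖ ^ 2 := by
  rw [trace_vecMulVec, ← real_inner_self_eq_norm_sq, EuclideanSpace.inner_eq_star_dotProduct]
  simp

lemma EuclideanSpace.trace_sum_vecMulVec_self_le_card {ι n : Type*} [Fintype n] (s : Finset ι)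
    {v : ι → EuclideanSpace ℝ n} (hv : ∀ i ∈ s, ‖v i‖ ≤ 1) :
    (∑ i ∈ s, vecMulVec (v i) (v i)).trace ≤ #s :=
  calc (∑ i ∈ s, vecMulVec (v i) (v i)).trace = ∑ i ∈ s, ‖v i‖ ^ 2 := by
        simp only [trace_sum, trace_vecMulVec_self]
    _ ≤ ∑ i ∈ s, 1 := sum_le_sum fun i hi => pow_le_one₀ (norm_nonneg _) (hv i hi)
    _ = #s := by simp

namespace Matrix

variable {n : Type*} [Fintype n] [DecidableEq n]

lemma PosSemidef.det_one_add_eq_prod {M : Matrix n n ℝ} (hM : M.PosSemidef) :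
    (1 + M).det = ∏ i, (1 + hM.1.eigenvalues i) := by
  conv_lhs => rw [hM.1.spectral_theorem,
    ← map_one (Unitary.conjStarAlgAut ℝ _ hM.1.eigenvectorUnitary), ← map_add, ← diagonal_one,
    diagonal_add]
  simp [-Unitary.conjStarAlgAut_apply]

lemma PosSemidef.one_add_trace_le_det_one_add {M : Matrix n n ℝ} (hM : M.PosSemidef) :
    1 + M.trace ≤ (1 + M).det := by
  rw [hM.det_one_add_eq_prod, hM.1.trace_eq_sum_eigenvalues]
  exact one_add_sum_le_prod_one_add _ fun i _ => hM.eigenvalues_nonneg i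

open scoped MatrixOrder in
lemma PosSemidef.trace_mul_nonneg {A B : Matrix n n ℝ} (hA : A.PosSemidef) (hB : B.PosSemidef) :
    0 ≤ (A * B).trace := by
  set S := CFC.sqrt A
  have hS : S.IsHermitian := (CFC.sqrt_nonneg A).posSemidef.isHermitian
  have hSS : S * S = A := CFC.sqrt_mul_sqrt_self A hA.nonneg
  have hSBS : (S * B * S).PosSemidef := by
    simpa only [hS.eq] using hB.conjTranspose_mul_mul_same S
  rw [← hSS, Matrix.mul_assoc, trace_mul_comm, Matrix.mul_assoc]
  simpa [Matrix.mul_assoc] using hSBS.trace_nonneg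

open scoped MatrixOrder in
lemma PosDef.det_mul_one_add_trace_le_det_add {A B : Matrix n n ℝ} (hA : A.PosDef)
    (hB : B.PosSemidef) : A.det * (1 + (A⁻¹ * B).trace) ≤ (A + B).det := by
  set S := CFC.sqrt A
  have hS : S.IsHermitian := (CFC.sqrt_nonneg A).posSemidef.isHermitian
  have hSS : S * S = A := CFC.sqrt_mul_sqrt_self A hA.posSemidef.nonneg
  have hSunit : IsUnit S.det :=
    isUnit_of_mul_isUnit_left (by rw [← det_mul, hSS]; exact hA.isUnit.map detMonoidHom)
  set M := S⁻¹ * B * S⁻¹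
  have hM : M.PosSemidef := by
    simpa only [hS.inv.eq] using hB.conjTranspose_mul_mul_same S⁻¹
  have hAB : A + B = S * (1 + M) * S := by
    simp only [M, Matrix.mul_add, Matrix.add_mul, Matrix.mul_one, hSS, Matrix.mul_assoc,
      mul_nonsing_inv_cancel_left _ _ hSunit, nonsing_inv_mul _ hSunit, Matrix.mul_one]
  have htr : M.trace = (A⁻¹ * B).trace := by
    rw [trace_mul_cycle, ← Matrix.mul_inv_rev, hSS]
  rw [hAB, det_mul, det_mul, ← htr, ← hSS, det_mul, mul_right_comm S.det _ S.det]
  exact mul_le_mul_of_nonneg_left hM.one_add_trace_le_det_one_add (mul_self_nonneg _)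

lemma PosDef.log_det_le {A : Matrix n n ℝ} (hA : A.PosDef) :
    Real.log A.det ≤ Fintype.card n * Real.log (A.trace / Fintype.card n) := by
  rcases isEmpty_or_nonempty n with hn | hn
  · simp
  have hcard : (0 : ℝ) < Fintype.card n := by exact_mod_cast Fintype.card_pos
  have hjensen := strictConcaveOn_log_Ioi.concaveOn.le_map_sum (t := univ)
    (w := fun _ => (Fintype.card n : ℝ)⁻¹) (p := hA.1.eigenvalues)
    (fun _ _ => by positivity) (by simp [card_univ]) (fun i _ => hA.eigenvalues_pos i)
  simp only [smul_eq_mul, ← mul_sum, inv_mul_le_iff₀ hcard] at hjensen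
  rw [hA.1.det_eq_prod_eigenvalues, hA.1.trace_eq_sum_eigenvalues, div_eq_inv_mul]
  simpa only [RCLike.ofReal_real_eq_id, id,
    Real.log_prod fun i _ => (hA.eigenvalues_pos i).ne'] using hjensen

end Matrix

section EllipticalPotential

variable {n : Type*} [DecidableEq n] {A Φ : ℕ → Matrix n n ℝ}

lemma posDef_of_succ_eq_add (hA0 : A 0 = 1) (hA : ∀ k, A (k + 1) = A k + Φ k)
    (hΦ : ∀ k, (Φ k).PosSemidef) (k : ℕ) : (A k).PosDef := by
  induction k with
  | zero => exact hA0 ▸ PosDef.one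
  | succ k ih => exact hA k ▸ ih.add_posSemidef (hΦ k)

variable [Fintype n]

lemma trace_inv_mul_nonneg_of_succ_eq_add (hA0 : A 0 = 1) (hA : ∀ k, A (k + 1) = A k + Φ k)
    (hΦ : ∀ k, (Φ k).PosSemidef) (k : ℕ) : 0 ≤ ((A k)⁻¹ * Φ k).trace :=
  (posDef_of_succ_eq_add hA0 hA hΦ k).inv.posSemidef.trace_mul_nonneg (hΦ k)

lemma sum_log_one_add_trace_inv_mul_le_log_det (hA0 : A 0 = 1)
    (hA : ∀ k, A (k + 1) = A k + Φ k) (hΦ : ∀ k, (Φ k).PosSemidef) (K : ℕ) :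
    ∑ k ∈ range K, Real.log (1 + ((A k)⁻¹ * Φ k).trace) ≤ Real.log (A K).det := by
  induction K with
  | zero => simp [hA0]
  | succ K ih =>
    have hApos := posDef_of_succ_eq_add hA0 hA hΦ K
    have htr := trace_inv_mul_nonneg_of_succ_eq_add hA0 hA hΦ K
    calc ∑ k ∈ range (K + 1), Real.log (1 + ((A k)⁻¹ * Φ k).trace)
        ≤ Real.log (A K).det + Real.log (1 + ((A K)⁻¹ * Φ K).trace) := by
          rw [sum_range_succ]; linarith
      _ = Real.log ((A K).det * (1 + ((A K)⁻¹ * Φ K).trace)) :=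
          (Real.log_mul hApos.det_pos.ne' (by linarith)).symm
      _ ≤ Real.log (A (K + 1)).det := by
          rw [hA K]
          exact Real.log_le_log (by have := hApos.det_pos; positivity)
            (hApos.det_mul_one_add_trace_le_det_add (hΦ K))

lemma card_filter_mul_log_one_add_le_log_det (hA0 : A 0 = 1)
    (hA : ∀ k, A (k + 1) = A k + Φ k) (hΦ : ∀ k, (Φ k).PosSemidef) {x : ℝ} (hx : 0 ≤ x)
    (K : ℕ) :
    #{k ∈ range K | x ≤ ((A k)⁻¹ * Φ k).trace} * Real.log (1 + x) ≤ Real.log (A K).det :=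
  calc #{k ∈ range K | x ≤ ((A k)⁻¹ * Φ k).trace} * Real.log (1 + x)
      ≤ ∑ k ∈ range K with x ≤ ((A k)⁻¹ * Φ k).trace, Real.log (1 + ((A k)⁻¹ * Φ k).trace) := by
        rw [← nsmul_eq_mul]
        exact card_nsmul_le_sum _ _ _ fun k hk =>
          Real.log_le_log (by positivity) (by linarith [(mem_filter.1 hk).2])
    _ ≤ ∑ k ∈ range K, Real.log (1 + ((A k)⁻¹ * Φ k).trace) :=
        sum_le_sum_of_subset_of_nonneg (filter_subset _ _) fun k _ _ =>
          Real.log_nonneg (by linarith [trace_inv_mul_nonneg_of_succ_eq_add hA0 hA hΦ k])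
    _ ≤ Real.log (A K).det := sum_log_one_add_trace_inv_mul_le_log_det hA0 hA hΦ K

lemma trace_le_of_succ_eq_add (hA0 : A 0 = 1) (hA : ∀ k, A (k + 1) = A k + Φ k) {c : ℝ} {K : ℕ}
    (hΦ : ∀ k < K, (Φ k).trace ≤ c) : (A K).trace ≤ Fintype.card n + K * c := by
  induction K with
  | zero => simp [hA0]
  | succ K ih =>
    rw [hA K, trace_add]
    have := ih fun k hk => hΦ k (hk.trans K.lt_succ_self)
    have := hΦ K K.lt_succ_self
    push_cast
    linarith

lemma log_det_le_of_succ_eq_add (hA0 : A 0 = 1) (hA : ∀ k, A (k + 1) = A k + Φ k)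
    (hΦ : ∀ k, (Φ k).PosSemidef) {c : ℝ} {K : ℕ} (hc : ∀ k < K, (Φ k).trace ≤ c) :
    Real.log (A K).det ≤ Fintype.card n * Real.log (1 + K * c / Fintype.card n) := by
  have hAK := posDef_of_succ_eq_add hA0 hA hΦ K
  refine hAK.log_det_le.trans ?_
  rcases isEmpty_or_nonempty n with hn | hn
  · simp
  have hcard : (0 : ℝ) < Fintype.card n := by exact_mod_cast Fintype.card_pos
  refine mul_le_mul_of_nonneg_left (Real.log_le_log (div_pos hAK.trace_pos hcard) ?_) hcard.le
  rw [div_le_iff₀ hcard, add_mul, div_mul_cancel₀ _ hcard.ne', one_mul]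
  exact trace_le_of_succ_eq_add hA0 hA hc

end EllipticalPotential

theorem batched_elliptical_potential_count_general
    (d K N : ℕ)
    (ε : ℝ) (hε : 0 < ε)
    (φ : ℕ → EuclideanSpace ℝ (Fin d))
    (hφ : ∀ t < K * N, ‖φ t‖ ≤ 1)
    (A : ℕ → Matrix (Fin d) (Fin d) ℝ)
    (hA0 : A 0 = 1)
    (hA : ∀ k, A (k + 1) = A k + ∑ t ∈ Finset.Ico (k * N) ((k + 1) * N),
        vecMulVec (φ t) (φ t)) :
    ({k : ℕ | k < K ∧ (N : ℝ) * ε ≤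
        Matrix.trace ((A k)⁻¹ * ∑ t ∈ Finset.Ico (k * N) ((k + 1) * N),
          vecMulVec (φ t) (φ t))}.ncard : ℝ) *
        Real.log ((N : ℝ) * ε / ((d : ℝ) * Real.log (1 + (K : ℝ) * N / d))) ≤
      (d : ℝ) * Real.log (1 + (K : ℝ) * N / d) := by
  set Φ : ℕ → Matrix (Fin d) (Fin d) ℝ :=
    fun k => ∑ t ∈ Ico (k * N) ((k + 1) * N), vecMulVec (φ t) (φ t)
  have hΦ : ∀ k, (Φ k).PosSemidef := fun k =>
    posSemidef_sum _ fun t _ => by simpa using posSemidef_vecMulVec_self_star (φ t).ofLp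
  have hΦtr : ∀ k < K, (Φ k).trace ≤ N := fun k hk => by
    refine (EuclideanSpace.trace_sum_vecMulVec_self_le_card _ fun t ht => hφ t ?_).trans_eq ?_
    · exact (mem_Ico.1 ht).2.trans_le (Nat.mul_le_mul_right N hk)
    · simp [add_mul]
  have hlogdet : Real.log (A K).det ≤ d * Real.log (1 + K * N / d) := by
    simpa using log_det_le_of_succ_eq_add hA0 hA hΦ hΦtr
  have hset : {k | k < K ∧ (N : ℝ) * ε ≤ ((A k)⁻¹ * Φ k).trace} =
      ↑{k ∈ range K | (N : ℝ) * ε ≤ ((A k)⁻¹ * Φ k).trace} := by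
    ext k; simp
  rw [hset, Set.ncard_coe_finset]
  exact Real.mul_log_div_le_of_mul_log_one_add_le (by positivity)
    ((card_filter_mul_log_one_add_le_log_det hA0 hA hΦ (by positivity) K).trans hlogdet)

/-- Counting bound for the batched elliptical potential: with `A_0 = I`,
`A_{k+1} = A_k + Φ_k` where `Φ_k = Σ_{t=kN}^{(k+1)N-1} φ_t φ_tᵀ` and `‖φ_t‖ ≤ 1`,
if `N ε ≥ d log(1 + KN/d)` then the set `K⁺` of batches `k < K` with
`Tr(A_k⁻¹ Φ_k) ≥ N ε` satisfies `|K⁺| · log(Nε / (d log(1 + KN/d))) ≤ d log(1 + KN/d)`. -/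
theorem batched_elliptical_potential_count
    (d K N : ℕ) (hd : 0 < d) (hK : 0 < K) (hN : 0 < N)
    (ε : ℝ) (hε : 0 < ε)
    (φ : ℕ → EuclideanSpace ℝ (Fin d))
    (hφ : ∀ t < K * N, ‖φ t‖ ≤ 1)
    (A : ℕ → Matrix (Fin d) (Fin d) ℝ)
    (hA0 : A 0 = 1)
    (hA : ∀ k, A (k + 1) = A k + ∑ t ∈ Finset.Ico (k * N) ((k + 1) * N),
        vecMulVec (φ t) (φ t))
    (hNε : (N : ℝ) * ε ≥ (d : ℝ) * Real.log (1 + (K : ℝ) * N / d)) :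
    ({k : ℕ | k < K ∧ (N : ℝ) * ε ≤
        Matrix.trace ((A k)⁻¹ * ∑ t ∈ Finset.Ico (k * N) ((k + 1) * N),
          vecMulVec (φ t) (φ t))}.ncard : ℝ) *
        Real.log ((N : ℝ) * ε / ((d : ℝ) * Real.log (1 + (K : ℝ) * N / d))) ≤
      (d : ℝ) * Real.log (1 + (K : ℝ) * N / d) :=
  batched_elliptical_potential_count_general d K N ε hε φ hφ A hA0 hA
end

section
/- Let A be a real symmetric d×d matrix such that A − I is positive semidefinite, and let Δ be a real symmetric d×d matrix with |Δ_{ij}| ≤ ε for all entries, where ε > 0 and d·ε < 1. Then for every φ ∈ ℝ^d with ‖φ‖ ≤ 1, | √(φᵀ (A+Δ)^{-1} φ) − √(φᵀ A^{-1} φ) | ≤ √( d·ε/(1 − d·ε) ). -/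
/-!
Entrywise, `|xᵀ Δ y| ≤ ε ‖x‖₁ ‖y‖₁ ≤ d ε ‖x‖ ‖y‖`. Hence `xᵀ (A + Δ) x ≥ (1 - d ε) ‖x‖²`, and a
matrix `M` with `xᵀ M x ≥ c ‖x‖²`, `c > 0`, is invertible with `‖M⁻¹ x‖ ≤ ‖x‖ / c` (as is `Mᵀ`).
By the resolvent identity `B⁻¹ - A⁻¹ = B⁻¹ (A - B) A⁻¹` the two quadratic forms of `φ` differ by
`(B⁻ᵀ φ)ᵀ (A - B) (A⁻¹ φ)`, which is at most `d ε / (1 - d ε)` in absolute value; finally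
`|√a - √b| ≤ √|a - b|`.
-/

open Matrix WithLp

theorem Real.abs_sqrt_sub_sqrt_le_sqrt_abs_sub (a b : ℝ) : |√a - √b| ≤ √|a - b| := by
  have sqrt_le_add (x y : ℝ) : √x ≤ √y + √|x - y| := by
    refine Real.sqrt_le_iff.2 ⟨by positivity, ?_⟩
    have hy : y ≤ √y ^ 2 := Real.sq_sqrt' (x := y) ▸ le_max_left y 0
    have hxy : |x - y| = √|x - y| ^ 2 := (Real.sq_sqrt (abs_nonneg _)).symm
    nlinarith [le_abs_self (x - y), Real.sqrt_nonneg y, Real.sqrt_nonneg |x - y|]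
  have hab := sqrt_le_add a b
  have hba := sqrt_le_add b a
  rw [abs_sub_comm] at hba
  exact abs_sub_le_iff.2 ⟨by linarith, by linarith⟩

variable {n : Type*} [Fintype n]

lemma dotProduct_self_eq_norm_sq (x : n → ℝ) : x ⬝ᵥ x = ‖toLp 2 x‖ ^ 2 := by
  rw [← real_inner_self_eq_norm_sq, EuclideanSpace.inner_toLp_toLp, star_trivial]

lemma abs_dotProduct_le_norm_mul_norm (x y : n → ℝ) :
    |x ⬝ᵥ y| ≤ ‖toLp 2 x‖ * ‖toLp 2 y‖ := by
  simpa [EuclideanSpace.inner_toLp_toLp, dotProduct_comm] using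
    abs_real_inner_le_norm (toLp 2 x) (toLp 2 y)

lemma sum_abs_le_sqrt_card_mul_norm (x : n → ℝ) :
    ∑ i, |x i| ≤ √(Fintype.card n) * ‖toLp 2 x‖ := by
  rw [EuclideanSpace.norm_eq, ← Real.sqrt_mul (Nat.cast_nonneg _)]
  refine Real.le_sqrt_of_sq_le ?_
  simpa [sq_abs] using sq_sum_le_card_mul_sum_sq (s := Finset.univ) (f := fun i => |x i|)

lemma abs_dotProduct_mulVec_le_of_abs_le {Δ : Matrix n n ℝ} {ε : ℝ} (hε : 0 ≤ ε)
    (hΔ : ∀ i j, |Δ i j| ≤ ε) (x y : n → ℝ) :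
    |x ⬝ᵥ Δ *ᵥ y| ≤ Fintype.card n * ε * (‖toLp 2 x‖ * ‖toLp 2 y‖) := by
  have hcard : √(Fintype.card n : ℝ) * √(Fintype.card n) = Fintype.card n :=
    Real.mul_self_sqrt (Nat.cast_nonneg _)
  calc |x ⬝ᵥ Δ *ᵥ y| = |∑ i, ∑ j, x i * Δ i j * y j| := by
        simp only [dotProduct, mulVec, Finset.mul_sum, mul_assoc]
    _ ≤ ∑ i, ∑ j, |x i| * ε * |y j| := by
        refine (Finset.abs_sum_le_sum_abs _ _).trans <| Finset.sum_le_sum fun i _ =>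
          (Finset.abs_sum_le_sum_abs _ _).trans <| Finset.sum_le_sum fun j _ => ?_
        rw [abs_mul, abs_mul]
        gcongr
        exact hΔ i j
    _ = ε * ((∑ i, |x i|) * ∑ j, |y j|) := by
        rw [Finset.sum_mul_sum, Finset.mul_sum]
        refine Finset.sum_congr rfl fun i _ => ?_
        rw [Finset.mul_sum]
        exact Finset.sum_congr rfl fun j _ => by ring
    _ ≤ ε * ((√(Fintype.card n) * ‖toLp 2 x‖) * (√(Fintype.card n) * ‖toLp 2 y‖)) := by
        gcongr <;> exact sum_abs_le_sqrt_card_mul_norm _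
    _ = Fintype.card n * ε * (‖toLp 2 x‖ * ‖toLp 2 y‖) := by
        linear_combination ε * ‖toLp 2 x‖ * ‖toLp 2 y‖ * hcard

namespace Matrix

def IsCoerciveWith (M : Matrix n n ℝ) (c : ℝ) : Prop :=
  ∀ x : n → ℝ, c * ‖toLp 2 x‖ ^ 2 ≤ x ⬝ᵥ M *ᵥ x

lemma isCoerciveWith_one_of_posSemidef_sub_one [DecidableEq n] {A : Matrix n n ℝ}
    (hA : (A - 1).PosSemidef) : A.IsCoerciveWith 1 := fun x => by
  have := hA.dotProduct_mulVec_nonneg x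
  rw [star_trivial, sub_mulVec, one_mulVec, dotProduct_sub, dotProduct_self_eq_norm_sq] at this
  linarith

lemma isCoerciveWith_neg_of_abs_le {Δ : Matrix n n ℝ} {ε : ℝ} (hε : 0 ≤ ε)
    (hΔ : ∀ i j, |Δ i j| ≤ ε) : Δ.IsCoerciveWith (-(Fintype.card n * ε)) := fun x => by
  have := (abs_le.1 (abs_dotProduct_mulVec_le_of_abs_le hε hΔ x x)).1
  linarith

namespace IsCoerciveWith

variable {M N : Matrix n n ℝ} {a b c : ℝ}

lemma add (hM : M.IsCoerciveWith a) (hN : N.IsCoerciveWith b) : (M + N).IsCoerciveWith (a + b) :=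
  fun x => by
    rw [add_mulVec, dotProduct_add, add_mul]
    exact add_le_add (hM x) (hN x)

lemma transpose (hM : M.IsCoerciveWith c) : Mᵀ.IsCoerciveWith c := fun x => by
  rw [mulVec_transpose, dotProduct_comm, ← dotProduct_mulVec]
  exact hM x

lemma isUnit_det [DecidableEq n] (hM : M.IsCoerciveWith c) (hc : 0 < c) : IsUnit M.det := by
  refine isUnit_iff_ne_zero.2 fun hdet => ?_
  obtain ⟨x, hx, hMx⟩ := exists_mulVec_eq_zero_iff.2 hdet
  have := hM x
  rw [hMx, dotProduct_zero] at this
  have hx' : 0 < ‖toLp 2 x‖ := norm_pos_iff.2 (by simpa using hx)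
  linarith [mul_pos hc (pow_pos hx' 2)]

lemma norm_inv_mulVec_le [DecidableEq n] (hM : M.IsCoerciveWith c) (hc : 0 < c) (x : n → ℝ) :
    ‖toLp 2 (M⁻¹ *ᵥ x)‖ ≤ ‖toLp 2 x‖ / c := by
  set y := M⁻¹ *ᵥ x
  have hMy : M *ᵥ y = x := by rw [mulVec_mulVec, mul_nonsing_inv _ (hM.isUnit_det hc), one_mulVec]
  have key : c * ‖toLp 2 y‖ ^ 2 ≤ ‖toLp 2 y‖ * ‖toLp 2 x‖ :=
    calc c * ‖toLp 2 y‖ ^ 2 ≤ y ⬝ᵥ M *ᵥ y := hM y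
      _ = y ⬝ᵥ x := by rw [hMy]
      _ ≤ ‖toLp 2 y‖ * ‖toLp 2 x‖ := (le_abs_self _).trans (abs_dotProduct_le_norm_mul_norm y x)
  rw [le_div_iff₀ hc]
  nlinarith [norm_nonneg (toLp 2 y), norm_nonneg (toLp 2 x)]

end IsCoerciveWith

lemma dotProduct_inv_mulVec_sub [DecidableEq n] {A B : Matrix n n ℝ} (hA : IsUnit A.det)
    (hB : IsUnit B.det) (x : n → ℝ) :
    x ⬝ᵥ B⁻¹ *ᵥ x - x ⬝ᵥ A⁻¹ *ᵥ x = (Bᵀ⁻¹ *ᵥ x) ⬝ᵥ (A - B) *ᵥ (A⁻¹ *ᵥ x) := by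
  have hBA : IsUnit B ↔ IsUnit A :=
    iff_of_true ((isUnit_iff_isUnit_det B).2 hB) ((isUnit_iff_isUnit_det A).2 hA)
  rw [← dotProduct_sub, ← sub_mulVec, inv_sub_inv hBA, ← mulVec_mulVec, ← mulVec_mulVec,
    dotProduct_mulVec, ← mulVec_transpose, transpose_nonsing_inv]

lemma abs_dotProduct_inv_mulVec_sub_le [DecidableEq n] {A B : Matrix n n ℝ} {a b δ : ℝ}
    (hA : A.IsCoerciveWith a) (ha : 0 < a) (hB : B.IsCoerciveWith b) (hb : 0 < b) (hδ : 0 ≤ δ)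
    (hAB : ∀ x y, |x ⬝ᵥ (A - B) *ᵥ y| ≤ δ * (‖toLp 2 x‖ * ‖toLp 2 y‖)) (x : n → ℝ) :
    |x ⬝ᵥ B⁻¹ *ᵥ x - x ⬝ᵥ A⁻¹ *ᵥ x| ≤ δ * ‖toLp 2 x‖ ^ 2 / (a * b) := by
  rw [dotProduct_inv_mulVec_sub (hA.isUnit_det ha) (hB.isUnit_det hb)]
  calc _ ≤ δ * (‖toLp 2 (Bᵀ⁻¹ *ᵥ x)‖ * ‖toLp 2 (A⁻¹ *ᵥ x)‖) := hAB _ _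
    _ ≤ δ * (‖toLp 2 x‖ / b * (‖toLp 2 x‖ / a)) := by
        gcongr
        exacts [hB.transpose.norm_inv_mulVec_le hb x, hA.norm_inv_mulVec_le ha x]
    _ = δ * ‖toLp 2 x‖ ^ 2 / (a * b) := by field_simp

end Matrix

theorem matrix_perturbation_sqrt_general
    (d : ℕ) (A Δ : Matrix (Fin d) (Fin d) ℝ) (ε : ℝ)
    (hA : (A - 1).PosSemidef)
    (hΔ : ∀ i j, |Δ i j| ≤ ε)
    (hε : 0 < ε) (hdε : (d : ℝ) * ε < 1) :
    ∀ φ : EuclideanSpace ℝ (Fin d), ‖φ‖ ≤ 1 →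
      |Real.sqrt (φ ⬝ᵥ ((A + Δ)⁻¹).mulVec φ) - Real.sqrt (φ ⬝ᵥ A⁻¹.mulVec φ)| ≤
        Real.sqrt ((d : ℝ) * ε / (1 - (d : ℝ) * ε)) := by
  intro φ hφ
  have hc : 0 < 1 - (d : ℝ) * ε := sub_pos.2 hdε
  have hAc : A.IsCoerciveWith 1 := isCoerciveWith_one_of_posSemidef_sub_one hA
  have hΔc : Δ.IsCoerciveWith (-(d * ε)) := by
    simpa using isCoerciveWith_neg_of_abs_le hε.le hΔ
  have hBc : (A + Δ).IsCoerciveWith (1 - d * ε) := by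
    simpa [sub_eq_add_neg] using hAc.add hΔc
  have hpert (x y : Fin d → ℝ) :
      |x ⬝ᵥ (A - (A + Δ)) *ᵥ y| ≤ d * ε * (‖toLp 2 x‖ * ‖toLp 2 y‖) := by
    simpa [sub_add_cancel_left, neg_mulVec] using abs_dotProduct_mulVec_le_of_abs_le hε.le hΔ x y
  have hdiff := abs_dotProduct_inv_mulVec_sub_le hAc one_pos hBc hc (by positivity) hpert φ
  rw [toLp_ofLp, one_mul] at hdiff
  refine (Real.abs_sqrt_sub_sqrt_le_sqrt_abs_sub _ _).trans (Real.sqrt_le_sqrt (hdiff.trans ?_))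
  gcongr ?_ / _
  exact mul_le_of_le_one_right (by positivity) (pow_le_one₀ (norm_nonneg φ) hφ)

/-- Matrix perturbation for square roots of quadratic forms: if `A ⪰ I` is real
symmetric and `Δ` is real symmetric with entries bounded by `ε` where `d·ε < 1`,
then for every unit-norm vector `φ`,
`|√(φᵀ(A+Δ)⁻¹φ) − √(φᵀA⁻¹φ)| ≤ √(d ε / (1 − d ε))`. -/
theorem matrix_perturbation_sqrt
    (d : ℕ) (A Δ : Matrix (Fin d) (Fin d) ℝ) (ε : ℝ)
    (hAsymm : A.IsSymm) (hA : (A - 1).PosSemidef)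
    (hΔsymm : Δ.IsSymm) (hΔ : ∀ i j, |Δ i j| ≤ ε)
    (hε : 0 < ε) (hdε : (d : ℝ) * ε < 1) :
    ∀ φ : EuclideanSpace ℝ (Fin d), ‖φ‖ ≤ 1 →
      |Real.sqrt (φ ⬝ᵥ ((A + Δ)⁻¹).mulVec φ) - Real.sqrt (φ ⬝ᵥ A⁻¹.mulVec φ)| ≤
        Real.sqrt ((d : ℝ) * ε / (1 - (d : ℝ) * ε)) :=
  matrix_perturbation_sqrt_general d A Δ ε hA hΔ hε hdε
end
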